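/- arXiv:1708.00883 — 2 statements merged into one kernel-verified Lean document; each statement's English description precedes it below -/
import Mathlib

section
/- Every partially symmetric tripartite graph G is degree symmetric: if for every edge (v_{i,j,k}, v_{s,u,v}) with i≠s the pair (v_{s,j,k}, v_{i,u,v}) is also an edge of G, then each vertex has the same degree in G and in the GTPT graph G'. -/
open Matrix

/-- The graph theoretical partial transpose (GTPT) of a tripartite graph on
`Fin m × Fin n × Fin q`: each edge `(v_{i,j,k}, v_{s,u,v})` with `i ≠ s` is replaced by
`(v_{s,j,k}, v_{i,u,v})`, and all other edges are kept. Its adjacency matrix is the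
partial transpose (in the first factor) of that of `G`. -/
def gtpt {m n q : ℕ} (G : SimpleGraph (Fin m × Fin n × Fin q)) :
    SimpleGraph (Fin m × Fin n × Fin q) where
  Adj x y := G.Adj (y.1, x.2) (x.1, y.2)
  symm := ⟨fun _ _ h => G.adj_symm h⟩
  loopless := ⟨fun _ h => G.irrefl h⟩

instance {m n q : ℕ} (G : SimpleGraph (Fin m × Fin n × Fin q)) [DecidableRel G.Adj] :
    DecidableRel (gtpt G).Adj :=
  fun x y => inferInstanceAs (Decidable (G.Adj (y.1, x.2) (x.1, y.2)))

/-- Partial transpose with respect to the first tensor factor. -/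
def partialTransposeA {α β R : Type*} (ρ : Matrix (α × β) (α × β) R) :
    Matrix (α × β) (α × β) R :=
  Matrix.of fun x y => ρ (y.1, x.2) (x.1, y.2)

def IsPartiallySymmetric {m n q : ℕ} (G : SimpleGraph (Fin m × Fin n × Fin q)) : Prop :=
  ∀ (i s : Fin m) (a b : Fin n × Fin q), i ≠ s → G.Adj (i, a) (s, b) → G.Adj (s, a) (i, b)

theorem IsPartiallySymmetric.gtpt_eq {m n q : ℕ} {G : SimpleGraph (Fin m × Fin n × Fin q)}
    (hG : IsPartiallySymmetric G) : gtpt G = G := by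
  ext ⟨i, a⟩ ⟨s, b⟩
  change G.Adj (s, a) (i, b) ↔ G.Adj (i, a) (s, b)
  rcases eq_or_ne i s with rfl | hne
  · rfl
  · exact ⟨hG s i a b hne.symm, hG i s a b hne⟩

/-- Every partially symmetric tripartite graph is degree symmetric: if for every edge
`(v_{i,j,k}, v_{s,u,v})` with `i ≠ s` the pair `(v_{s,j,k}, v_{i,u,v})` is also an edge,
then every vertex has the same degree in `G` and in the GTPT graph `G'`. -/
theorem degree_symmetric_of_partially_symmetric {m n q : ℕ}
    (G : SimpleGraph (Fin m × Fin n × Fin q)) [DecidableRel G.Adj]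
    (hps : ∀ (i s : Fin m) (a b : Fin n × Fin q),
      i ≠ s → G.Adj (i, a) (s, b) → G.Adj (s, a) (i, b)) :
    ∀ v, G.degree v = (gtpt G).degree v := by
  have hG : gtpt G = G := IsPartiallySymmetric.gtpt_eq hps
  intro v
  -- `convert` also reconciles the two `DecidableRel` instances, which `rw [hG]` cannot.
  convert rfl
end

section
/- If a multipartite graph G on N_1⋯N_n vertices is degree symmetric under GTPT with resulting graph G', then full separability of ρ_l(G) on H_1 ⊗ ⋯ ⊗ H_n implies full separability of ρ_l(G'). -/
open Matrix
open scoped ComplexOrder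

/-- The graph theoretical partial transpose (GTPT) of a multipartite graph whose
vertices `v_{i_1,…,i_n}` are functions `x` with `x j : Fin (N j)`: each edge `(x, y)` with
`x 0 ≠ y 0` is replaced by the edge obtained from exchanging the first coordinates of the
endpoints, and all other edges are kept. -/
def gtptN {k : ℕ} {N : Fin (k + 1) → ℕ}
    (G : SimpleGraph (∀ j : Fin (k + 1), Fin (N j))) :
    SimpleGraph (∀ j : Fin (k + 1), Fin (N j)) where
  Adj x y := G.Adj (Function.update x 0 (y 0)) (Function.update y 0 (x 0))
  symm := ⟨fun _ _ h => G.symm.symm _ _ h⟩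
  loopless := ⟨fun x h => G.loopless.irrefl x (by simpa [Function.update_eq_self] using h)⟩

instance {k : ℕ} {N : Fin (k + 1) → ℕ} (G : SimpleGraph (∀ j : Fin (k + 1), Fin (N j)))
    [DecidableRel G.Adj] : DecidableRel (gtptN G).Adj :=
  fun _ _ => inferInstanceAs (Decidable (G.Adj _ _))

/-- A density matrix: positive semidefinite with unit trace. -/
def IsDensity {d : Type*} [Fintype d] [DecidableEq d] (ρ : Matrix d d ℂ) : Prop :=
  ρ.PosSemidef ∧ ρ.trace = 1

/-- Full separability of a multipartite matrix on `ℂ^{N 0} ⊗ ⋯ ⊗ ℂ^{N k}`: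
`ρ = ∑ i, q_i ρ_i^1 ⊗ ⋯ ⊗ ρ_i^n` with `q` a probability distribution and each `ρ_i^j` a
density matrix. -/
def FullySepN {k : ℕ} {N : Fin (k + 1) → ℕ}
    (ρ : Matrix (∀ j : Fin (k + 1), Fin (N j)) (∀ j : Fin (k + 1), Fin (N j)) ℂ) : Prop :=
  ∃ (t : ℕ) (p : Fin t → ℝ)
    (F : Fin t → ∀ j : Fin (k + 1), Matrix (Fin (N j)) (Fin (N j)) ℂ),
    (∀ i, 0 ≤ p i) ∧ (∑ i, p i = 1) ∧
    (∀ i j, IsDensity (F i j)) ∧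
    ρ = ∑ i, (p i : ℂ) • Matrix.of (fun x y => ∏ j, F i j (x j) (y j))

/-- The Laplacian density matrix `ρ_l(G) = L(G) / tr(L(G))` (over `ℂ`). -/
noncomputable def rhoLap {k : ℕ} {N : Fin (k + 1) → ℕ}
    (G : SimpleGraph (∀ j : Fin (k + 1), Fin (N j))) [DecidableRel G.Adj] :
    Matrix (∀ j : Fin (k + 1), Fin (N j)) (∀ j : Fin (k + 1), Fin (N j)) ℂ :=
  ((G.lapMatrix ℂ).trace)⁻¹ • G.lapMatrix ℂ

/-!
Off the diagonal, `A(G') = A(G)^{T_1}` is the definition of the GTPT, and degree symmetry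
says that the degree matrices agree, so `L(G') = L(G)^{T_1}`; since partial transposition
keeps the trace, `ρ_l(G') = ρ_l(G)^{T_1}`. Partial transposition is linear and sends a
product `ρ^1 ⊗ ρ^2 ⊗ ⋯ ⊗ ρ^n` to `(ρ^1)ᵀ ⊗ ρ^2 ⊗ ⋯ ⊗ ρ^n`, and the transpose of a density
matrix is a density matrix, so it maps fully separable states to fully separable states.
-/

namespace Matrix

variable {ι R : Type*} [DecidableEq ι] {κ : ι → Type*}

def partialTranspose [Semiring R] (a : ι) :
    Matrix (∀ i, κ i) (∀ i, κ i) R →ₗ[R] Matrix (∀ i, κ i) (∀ i, κ i) R where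
  toFun ρ := of fun x y => ρ (Function.update x a (y a)) (Function.update y a (x a))
  map_add' _ _ := rfl
  map_smul' _ _ := rfl

theorem partialTranspose_apply [Semiring R] (a : ι) (ρ : Matrix (∀ i, κ i) (∀ i, κ i) R)
    (x y : ∀ i, κ i) :
    partialTranspose a ρ x y = ρ (Function.update x a (y a)) (Function.update y a (x a)) :=
  rfl

theorem trace_partialTranspose [Fintype ι] [∀ i, Fintype (κ i)] [Semiring R]
    (a : ι) (ρ : Matrix (∀ i, κ i) (∀ i, κ i) R) :
    (partialTranspose a ρ).trace = ρ.trace := by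
  simp [trace, partialTranspose_apply]

theorem partialTranspose_of_prod [Fintype ι] [CommSemiring R] (a : ι)
    (F : ∀ j, Matrix (κ j) (κ j) R) :
    partialTranspose a (of fun x y => ∏ j, F j (x j) (y j)) =
      of fun x y => ∏ j, Function.update F a (F a)ᵀ j (x j) (y j) := by
  ext x y
  refine Finset.prod_congr rfl fun j _ => ?_
  by_cases hj : j = a
  · subst hj
    simp
  · simp [Function.update_of_ne hj]

end Matrix

theorem Function.update_eq_update_swap_iff {ι : Type*} [DecidableEq ι] {κ : ι → Type*}
    {a : ι} {x y : ∀ i, κ i} :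
    Function.update x a (y a) = Function.update y a (x a) ↔ x = y := by
  refine ⟨fun h => funext fun j => ?_, fun h => h ▸ rfl⟩
  by_cases hj : j = a
  · subst hj
    simpa using (congrFun h j).symm
  · simpa [Function.update_of_ne hj] using congrFun h j

theorem IsDensity.transpose {d : Type*} [Fintype d] [DecidableEq d] {ρ : Matrix d d ℂ}
    (hρ : IsDensity ρ) : IsDensity ρᵀ :=
  ⟨hρ.1.transpose, (trace_transpose ρ).trans hρ.2⟩

theorem FullySepN.partialTranspose {k : ℕ} {N : Fin (k + 1) → ℕ}
    {ρ : Matrix (∀ j : Fin (k + 1), Fin (N j)) (∀ j : Fin (k + 1), Fin (N j)) ℂ}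
    (hρ : FullySepN ρ) : FullySepN (partialTranspose 0 ρ) := by
  obtain ⟨t, p, F, hp_nonneg, hp_sum, hF, rfl⟩ := hρ
  refine ⟨t, p, fun i => Function.update (F i) 0 (F i 0)ᵀ, hp_nonneg, hp_sum, fun i j => ?_, ?_⟩
  · by_cases hj : j = 0
    · subst hj
      simpa using (hF i 0).transpose
    · simpa [Function.update_of_ne hj] using hF i j
  · simp only [map_sum, map_smul, partialTranspose_of_prod]

section Laplacian

variable {k : ℕ} {N : Fin (k + 1) → ℕ} (G : SimpleGraph (∀ j : Fin (k + 1), Fin (N j)))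
  [DecidableRel G.Adj]

theorem lapMatrix_gtptN {R : Type*} [Ring R] (hdeg : ∀ v, G.degree v = (gtptN G).degree v) :
    (gtptN G).lapMatrix R = partialTranspose 0 (G.lapMatrix R) := by
  ext x y
  simp only [SimpleGraph.lapMatrix, SimpleGraph.degMatrix, partialTranspose_apply,
    Matrix.sub_apply, diagonal_apply, SimpleGraph.adjMatrix_apply]
  by_cases hxy : x = y
  · subst hxy
    rw [Function.update_eq_self]
    simp [hdeg]
  · rw [if_neg hxy, if_neg (Function.update_eq_update_swap_iff.not.mpr hxy)]
    rfl

theorem rhoLap_gtptN (hdeg : ∀ v, G.degree v = (gtptN G).degree v) :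
    rhoLap (gtptN G) = partialTranspose 0 (rhoLap G) := by
  rw [rhoLap, rhoLap, map_smul, lapMatrix_gtptN G hdeg, trace_partialTranspose]

end Laplacian

/-- If a multipartite graph `G` is degree symmetric under GTPT with resulting graph `G'`,
then full separability of `ρ_l(G)` implies full separability of `ρ_l(G')`. -/
theorem fullySep_of_degreeSymmetric_multipartite {k : ℕ} {N : Fin (k + 1) → ℕ}
    (G : SimpleGraph (∀ j : Fin (k + 1), Fin (N j))) [DecidableRel G.Adj]
    (hdeg : ∀ v, G.degree v = (gtptN G).degree v)
    (hsep : FullySepN (rhoLap G)) :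
    FullySepN (rhoLap (gtptN G)) := by
  rw [rhoLap_gtptN G hdeg]
  exact hsep.partialTranspose
end
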